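/- Let $\{M_n\}$ be a stationary ergodic Markov chain of order one on a finite or countable state space $S$, let $s\in S$ with $P(M_1=s)>0$ be a state visited with positive probability, and set $X_n = \mathbf{1}_{\{M_n=s\}}$. Then the binary process $\{X_n\}$ is stationary, ergodic, and finitarily Markovian: almost surely the conditional distribution of $X_1$ given $X_{-\infty}^0$ depends only on the coordinates back to (and including) the most recent occurrence of a one in $X_{-\infty}^0$. -/

import Mathlib

open MeasureTheory Filter Set
open scoped ENNReal

attribute [local instance] Classical.propDecidable

namespace MemoryEst

variable {Ω : Type*} [MeasurableSpace Ω] {𝒳 : Type*} [MeasurableSpace 𝒳]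

/-- The word `w` (read left to right) occupies positions `l - w.length + 1, …, l`. -/
def wordEndsAt (X : ℤ → Ω → 𝒳) (l : ℤ) (w : List 𝒳) (ω : Ω) : Prop :=
  ∀ j : Fin w.length, X (l - (w.length : ℤ) + 1 + ((j : ℕ) : ℤ)) ω = w.get j

def cyl (X : ℤ → Ω → 𝒳) (l : ℤ) (w : List 𝒳) : Set Ω := {ω | wordEndsAt X l w ω}

/-- `P(X_{-k+1}^0 = w)` where `k = w.length`. -/
noncomputable def wordProb (μ : Measure Ω) (X : ℤ → Ω → 𝒳) (w : List 𝒳) : ℝ :=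
  (μ (cyl X 0 w)).toReal

/-- `p(x | w) = P(X_1 = x | X_{-k+1}^0 = w)`. -/
noncomputable def condProb (μ : Measure Ω) (X : ℤ → Ω → 𝒳) (x : 𝒳) (w : List 𝒳) : ℝ :=
  (μ (cyl X 0 w ∩ {ω | X 1 ω = x})).toReal / wordProb μ X w

def IsStationary (μ : Measure Ω) (X : ℤ → Ω → 𝒳) : Prop :=
  ∀ (l : ℤ) (w : List 𝒳), μ (cyl X l w) = μ (cyl X 0 w)

/-- `w` is a memory word: it has positive probability and the conditional law of the
next symbol does not change under any left extension of positive probability. -/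
def IsMemoryWord (μ : Measure Ω) (X : ℤ → Ω → 𝒳) (w : List 𝒳) : Prop :=
  0 < wordProb μ X w ∧
    ∀ (z : List 𝒳) (y : 𝒳), z ≠ [] → 0 < wordProb μ X (z ++ w ++ [y]) →
      condProb μ X y w = condProb μ X y (z ++ w)

/-- The word `(X_{l-k+1}, …, X_l)`. -/
def pastWord (X : ℤ → Ω → 𝒳) (l : ℤ) (k : ℕ) (ω : Ω) : List 𝒳 :=
  (List.range k).map fun j => X (l - (k : ℤ) + 1 + (j : ℤ)) ω

/-- `K(X_{-∞}^l)`: least `k` such that `X_{l-k+1}^l` is a memory word (`sInf ∅ = 0`). -/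
noncomputable def memoryLenNat (μ : Measure Ω) (X : ℤ → Ω → 𝒳) (l : ℤ) (ω : Ω) : ℕ :=
  sInf {k : ℕ | IsMemoryWord μ X (pastWord X l k ω)}

def FinitarilyMarkovian (μ : Measure Ω) (X : ℤ → Ω → 𝒳) : Prop :=
  ∀ᵐ ω ∂μ, ∃ k : ℕ, IsMemoryWord μ X (pastWord X 0 k ω)

/-- Number of positions `l ∈ [a,b]` at which the word `w` ends. -/
noncomputable def countOcc (X : ℤ → Ω → 𝒳) (a b : ℤ) (w : List 𝒳) (ω : Ω) : ℕ :=
  ((Finset.Icc a b).filter fun l => wordEndsAt X l w ω).card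

/-- Empirical conditional probability `p̂_n(x|w)` from the data segment `X_{-n}^0`. -/
noncomputable def empP (X : ℤ → Ω → 𝒳) (n : ℕ) (x : 𝒳) (w : List 𝒳) (ω : Ω) : ℝ :=
  (countOcc X (-(n : ℤ) + w.length) 0 (w ++ [x]) ω : ℝ) /
    (countOcc X (-(n : ℤ) + w.length - 1) (-1) w ω : ℝ)

/-- `w ∈ 𝓛ⁿ_{w.length}`: the word `w` appears more than `n^{1-γ}` times in `X_{-n}^0`. -/
def memLong (γ : ℝ) (X : ℤ → Ω → 𝒳) (n : ℕ) (w : List 𝒳) (ω : Ω) : Prop :=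
  (n : ℝ) ^ (1 - γ) < (countOcc X (-(n : ℤ) + w.length - 1) 0 w ω : ℝ)

/-- Empirical discrepancy `Δ̂ⁿ_k(w)` (with `sSup ∅ = 0`). -/
noncomputable def empDelta (γ : ℝ) (X : ℤ → Ω → 𝒳) (n : ℕ) (w : List 𝒳) (ω : Ω) : ℝ :=
  sSup {d : ℝ | ∃ (z : List 𝒳) (x : 𝒳), 1 ≤ z.length ∧ z.length ≤ n ∧
    memLong γ X n (z ++ w ++ [x]) ω ∧
    d = |empP X n x w ω - empP X n x (z ++ w) ω|}

/-- The discrepancy `Δ_k(w)` measuring failure of `w` to be a memory word. -/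
noncomputable def Delta (μ : Measure Ω) (X : ℤ → Ω → 𝒳) (w : List 𝒳) : ℝ :=
  sSup {d : ℝ | ∃ (z : List 𝒳) (x : 𝒳), z ≠ [] ∧ 0 < wordProb μ X (z ++ w ++ [x]) ∧
    d = |condProb μ X x w - condProb μ X x (z ++ w)|}

def NTEST (γ β : ℝ) (X : ℤ → Ω → 𝒳) (n : ℕ) (w : List 𝒳) (ω : Ω) : Prop :=
  empDelta γ X n w ω ≤ (n : ℝ) ^ (-β)

/-- Forward recurrence times `λ⁺_{l,k,i}` of the word occupying `(l-k, l]`. -/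
noncomputable def lamPos (X : ℤ → Ω → 𝒳) (l : ℤ) (k : ℕ) (ω : Ω) : ℕ → ℕ
  | 0 => 0
  | i + 1 =>
    lamPos X l k ω i +
      sInf {t : ℕ | 0 < t ∧ ∀ j : Fin k,
        X (l + (lamPos X l k ω i : ℤ) + (t : ℤ) - ((j : ℕ) : ℤ)) ω =
          X (l + (lamPos X l k ω i : ℤ) - ((j : ℕ) : ℤ)) ω}

/-- Backward recurrence times `λ⁻_{l,k,i}` of the word occupying `(l-k, l]`. -/
noncomputable def lamNeg (X : ℤ → Ω → 𝒳) (l : ℤ) (k : ℕ) (ω : Ω) : ℕ → ℕ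
  | 0 => 0
  | i + 1 =>
    lamNeg X l k ω i +
      sInf {t : ℕ | 0 < t ∧ ∀ j : Fin k,
        X (l - (lamNeg X l k ω i : ℤ) - (t : ℤ) - ((j : ℕ) : ℤ)) ω =
          X (l - (lamNeg X l k ω i : ℤ) - ((j : ℕ) : ℤ)) ω}

/-- The left shift on two-sided path space. -/
def shift (𝒳 : Type*) : (ℤ → 𝒳) → (ℤ → 𝒳) := fun ω n => ω (n + 1)

/-- The canonical process on path space. -/
def proc (𝒳 : Type*) : ℤ → (ℤ → 𝒳) → 𝒳 := fun n ω => ω n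

/-- First order Markov property for the canonical process. -/
def MarkovOrderOne {S : Type*} [MeasurableSpace S] (μ : Measure (ℤ → S)) : Prop :=
  ∀ (w : List S) (a y : S), 0 < wordProb μ (proc S) (w ++ [a]) →
    condProb μ (proc S) y (w ++ [a]) = condProb μ (proc S) y [a]

/-- Markov chain of order `L`: every positive-probability word of length `L` is a memory word. -/
def MarkovOfOrder {S : Type*} [MeasurableSpace S] (μ : Measure (ℤ → S)) (L : ℕ) : Prop :=
  ∀ w : List S, w.length = L → 0 < wordProb μ (proc S) w → IsMemoryWord μ (proc S) w

/-- The forward recurrence times `ζ_n(i)` of the left-extension reconstruction scheme. -/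
noncomputable def zeta (X : ℤ → Ω → 𝒳) (i : ℕ) (ω : Ω) : ℕ → ℕ
  | 0 => 0
  | n + 1 =>
    zeta X i ω n +
      sInf {t : ℕ | 0 < t ∧ ∀ j : Fin (n + 1),
        X ((i : ℤ) + (zeta X i ω n : ℤ) - (n : ℤ) + ((j : ℕ) : ℤ) + (t : ℤ)) ω =
          X ((i : ℤ) + (zeta X i ω n : ℤ) - (n : ℤ) + ((j : ℕ) : ℤ)) ω}

/-- The reconstructed past `X̃_{-n}(i)`. -/
noncomputable def tildeX (X : ℤ → Ω → 𝒳) (i : ℕ) (n : ℕ) (ω : Ω) : 𝒳 :=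
  X ((i : ℤ) + (zeta X i ω n : ℤ) - (n : ℤ)) ω

/-- The backward recurrence times `ζ̂ᵏ_i`. -/
noncomputable def hatZeta (X : ℤ → Ω → 𝒳) (k : ℕ) (ω : Ω) : ℕ → ℤ
  | 0 => 0
  | i + 1 =>
    hatZeta X k ω i -
      sInf {t : ℕ | 0 < t ∧ ∀ j : Fin (k - i),
        X (hatZeta X k ω i - ((k - i - 1 : ℕ) : ℤ) + ((j : ℕ) : ℤ) - (t : ℤ)) ω =
          X (hatZeta X k ω i - ((k - i - 1 : ℕ) : ℤ) + ((j : ℕ) : ℤ)) ω}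

/-- The transition matrix of the chain `Z` on the nonnegative integers. -/
noncomputable def Ptrans (s j : ℕ) : ℝ :=
  if s < j then (2 : ℝ) ^ (-((j : ℤ) - (s : ℤ)) - 1)
  else if j = s then (2 : ℝ) ^ (-(s : ℤ) - 1)
  else (2 : ℝ) ^ (-(j : ℤ) - 2)

/-- The backward memory-length estimator `χ_n`. -/
noncomputable def chiEst (γ β : ℝ) (X : ℤ → Ω → 𝒳) (n : ℕ) (ω : Ω) : ℕ :=
  if ∃ k, k < n ∧ NTEST γ β X n (pastWord X 0 k ω) ω then
    sInf {k : ℕ | k < n ∧ NTEST γ β X n (pastWord X 0 k ω) ω}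
  else n

/-! Split a path of the chain at a visit to `s`: by the Markov property the probability of the
cylinder `u ++ s :: v` is `P(u ++ [s])` times the product of the transition probabilities along
`s :: v`. Summing over all state words with a given indicator pattern, the indicator process gives
`z ++ true :: w` the probability `E z * H w`, so in every conditional probability given a past word
that starts with a `1` the factor `E z` coming from further back cancels. Ergodicity makes a visit
to `s` in the past almost sure, and the indicator process inherits stationarity and ergodicity as
a factor of the chain. -/

section Cylinders

variable {α β : Type*} {X : ℤ → α → β} {l : ℤ} {ω : α}

-- The cast `(j : ℤ)` in `pastWord` is elaborated as a coercion of `List.range k` to `List ℤ`.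
lemma pastWord_eq_map {k : ℕ} :
    pastWord X l k ω = (List.range k).map fun j : ℕ => X (l - k + 1 + j) ω := by
  simp only [pastWord, bind_pure_comp, List.map_eq_map, List.map_map]
  rfl

@[simp] lemma pastWord_length {k : ℕ} : (pastWord X l k ω).length = k := by
  simp [pastWord_eq_map]

lemma pastWord_succ {k : ℕ} : pastWord X l (k + 1) ω = X (l - k) ω :: pastWord X l k ω := by
  simp only [pastWord_eq_map, List.range_succ_eq_map, List.map_cons, List.map_map]
  congr 2
  · push_cast; ring
  · funext j; simp only [Function.comp_apply, Nat.cast_succ]; congr 1; ring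

lemma mem_cyl_iff {w : List β} : ω ∈ cyl X l w ↔ pastWord X l w.length ω = w := by
  simp only [cyl, Set.mem_ofPred_eq, wordEndsAt, List.ext_get_iff, pastWord_length, true_and]
  constructor
  · intro h j hj _
    simpa [pastWord_eq_map] using h ⟨j, by simpa using hj⟩
  · intro h j
    simpa [pastWord_eq_map] using h j (by simp) j.2

lemma mem_cyl_pastWord {k : ℕ} : ω ∈ cyl X l (pastWord X l k ω) := by
  rw [mem_cyl_iff, pastWord_length]

lemma disjoint_cyl {u v : List β} (hlen : u.length = v.length) (hne : u ≠ v) :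
    Disjoint (cyl X l u) (cyl X l v) :=
  Set.disjoint_left.2 fun _ hu hv =>
    hne ((mem_cyl_iff.1 hu).symm.trans (hlen ▸ mem_cyl_iff.1 hv))

lemma cyl_append {P R : List β} : cyl X l (P ++ R) = cyl X (l - R.length) P ∩ cyl X l R := by
  ext ω
  simp only [cyl, Set.mem_inter_iff, Set.mem_ofPred_eq, wordEndsAt, Fin.forall_iff,
    List.length_append, List.get_eq_getElem]
  constructor
  · intro h
    refine ⟨fun j hj => ?_, fun j hj => ?_⟩
    · convert h j (by omega) using 1
      · push_cast; ring_nf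
      · rw [List.getElem_append_left hj]
    · convert h (P.length + j) (by omega) using 1
      · push_cast; ring_nf
      · rw [List.getElem_append_right (by omega)]; simp
  · rintro ⟨hP, hR⟩ j hj
    rcases lt_or_ge j P.length with hj' | hj'
    · rw [List.getElem_append_left hj']
      convert hP j hj' using 2
      push_cast; ring
    · rw [List.getElem_append_right hj']
      convert hR (j - P.length) (by omega) using 2
      push_cast; omega

lemma cyl_singleton {a : β} : cyl X l [a] = {ω | X l ω = a} := by
  ext ω
  simp [cyl, wordEndsAt]

end Cylinders

section Stationary

variable {α β : Type*} [MeasurableSpace α] {ν : Measure α} {X : ℤ → α → β}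

lemma IsStationary.measure_cyl_append_singleton (hst : IsStationary ν X) (w : List β) (y : β) :
    ν (cyl X 0 (w ++ [y])) = ν (cyl X 0 w ∩ {ω | X 1 ω = y}) := by
  rw [← hst 1, cyl_append, cyl_singleton]
  norm_num

lemma IsStationary.condProb_eq (hst : IsStationary ν X) (w : List β) (y : β) :
    condProb ν X y w = wordProb ν X (w ++ [y]) / wordProb ν X w := by
  unfold condProb wordProb
  rw [hst.measure_cyl_append_singleton]

lemma ae_measure_cyl_pastWord_ne_zero [Countable β] :
    ∀ᵐ ω ∂ν, ∀ k : ℕ, ν (cyl X 0 (pastWord X 0 k ω)) ≠ 0 := by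
  have : ∀ᵐ ω ∂ν, ∀ w : List β, ν (cyl X 0 w) = 0 → ω ∉ cyl X 0 w := by
    rw [ae_all_iff]
    intro w
    by_cases hw : ν (cyl X 0 w) = 0
    · filter_upwards [measure_eq_zero_iff_ae_notMem.1 hw] with ω hω _ using hω
    · exact Eventually.of_forall fun _ h => absurd h hw
  filter_upwards [this] with ω hω k h0 using hω _ h0 mem_cyl_pastWord

variable [IsFiniteMeasure ν]

lemma wordProb_pos_iff {w : List β} : 0 < wordProb ν X w ↔ ν (cyl X 0 w) ≠ 0 := by
  simp [wordProb, ENNReal.toReal_pos_iff, pos_iff_ne_zero, measure_lt_top]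

lemma IsStationary.wordProb_append_singleton_le (hst : IsStationary ν X) (w : List β) (y : β) :
    wordProb ν X (w ++ [y]) ≤ wordProb ν X w := by
  rw [wordProb, wordProb, hst.measure_cyl_append_singleton]
  exact ENNReal.toReal_mono (measure_ne_top _ _) (measure_mono Set.inter_subset_left)

lemma IsStationary.measure_cyl_append_singleton_eq_mul (hst : IsStationary ν X) (w : List β)
    (y : β) : ν (cyl X 0 (w ++ [y])) = ν (cyl X 0 w) * ENNReal.ofReal (condProb ν X y w) := by
  by_cases hw : ν (cyl X 0 w) = 0
  · rw [hw, zero_mul, hst.measure_cyl_append_singleton]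
    exact measure_mono_null Set.inter_subset_left hw
  · rw [hst.condProb_eq, wordProb, wordProb, ← ENNReal.toReal_div,
      ENNReal.ofReal_toReal (ENNReal.div_ne_top (measure_ne_top _ _) hw),
      ENNReal.mul_div_cancel hw (measure_ne_top _ _)]

lemma IsStationary.isMemoryWord_of_factorization (hst : IsStationary ν X) {w : List β}
    (hw : 0 < wordProb ν X w) (E H : List β → ℝ≥0∞)
    (hEH : ∀ z v, ν (cyl X 0 (z ++ w ++ v)) = E z * H v) : IsMemoryWord ν X w := by
  have hcond : ∀ z y, 0 < wordProb ν X (z ++ w) →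
      condProb ν X y (z ++ w) = (H [y]).toReal / (H []).toReal := by
    intro z y hz
    have hz' : ν (cyl X 0 (z ++ w)) = E z * H [] := by simpa using hEH z []
    have hE : (E z).toReal ≠ 0 := by
      refine left_ne_zero_of_mul (b := (H []).toReal) ?_
      rw [← ENNReal.toReal_mul, ← hz']
      exact hz.ne'
    rw [hst.condProb_eq, wordProb, wordProb, hEH, hz', ENNReal.toReal_mul, ENNReal.toReal_mul,
      mul_div_mul_left _ _ hE]
  refine ⟨hw, fun z y _ hzy => ?_⟩
  have hz : 0 < wordProb ν X (z ++ w) :=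
    hzy.trans_le (hst.wordProb_append_singleton_le _ _)
  rw [hcond z y hz, ← List.nil_append w, hcond [] y (by simpa using hw)]

end Stationary

section PathSpace

variable {β : Type*}

lemma shift_preimage_cyl {l : ℤ} {w : List β} :
    shift β ⁻¹' cyl (proc β) l w = cyl (proc β) (l + 1) w := by
  ext ω
  simp only [Set.mem_preimage, cyl, Set.mem_ofPred_eq, wordEndsAt, proc, shift]
  constructor <;> intro h j <;> convert h j using 2 <;> ring

variable [MeasurableSpace β]

lemma measurable_shift : Measurable (shift β) :=
  measurable_pi_lambda _ fun n => measurable_pi_apply (n + 1)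

lemma ae_exists_past_mem_of_ergodic {ν : Measure (ℤ → β)} [IsFiniteMeasure ν]
    (h : Ergodic (shift β) ν) {T : Set β} (hT : MeasurableSet T)
    (hpos : ν {ω | ω 1 ∈ T} ≠ 0) : ∀ᵐ ω ∂ν, ∃ m : ℕ, ω (-(m : ℤ)) ∈ T := by
  set B := {ω : ℤ → β | ∃ m : ℕ, ω (-(m : ℤ)) ∈ T}
  have hB : MeasurableSet B := by
    simp only [B, Set.ofPred_exists]
    exact .iUnion fun m => measurable_pi_apply _ hT
  have hsub : B ⊆ shift β ⁻¹' B := fun ω ⟨m, hm⟩ => ⟨m + 1, by simpa [shift] using hm⟩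
  have hone : {ω | ω 1 ∈ T} ⊆ shift β ⁻¹' B := fun ω hω => ⟨0, by simpa [shift] using hω⟩
  rcases h.ae_empty_or_univ_of_ae_le_preimage hB.nullMeasurableSet hsub.eventuallyLE
    with h0 | h1
  · refine absurd (measure_mono_null hone ?_) hpos
    rw [h.measure_preimage hB.nullMeasurableSet]
    exact ae_eq_empty.1 h0
  · exact ae_iff.2 (ae_eq_univ.1 h1)

variable [MeasurableSingletonClass β]

lemma measurableSet_cyl {l : ℤ} {w : List β} : MeasurableSet (cyl (proc β) l w) := by
  have : cyl (proc β) l w =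
      ⋂ j : Fin w.length, (fun ω : ℤ → β => ω (l - w.length + 1 + (j : ℕ))) ⁻¹' {w.get j} := by
    ext ω; simp [cyl, wordEndsAt, proc]
  rw [this]
  exact .iInter fun j => measurable_pi_apply _ (measurableSet_singleton _)

lemma isStationary_of_measurePreserving {ν : Measure (ℤ → β)}
    (h : MeasurePreserving (shift β) ν ν) : IsStationary ν (proc β) := by
  intro l w
  have step : ∀ l, ν (cyl (proc β) (l + 1) w) = ν (cyl (proc β) l w) := fun l => by
    rw [← shift_preimage_cyl, h.measure_preimage measurableSet_cyl.nullMeasurableSet]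
  induction l using Int.induction_on with
  | zero => rfl
  | succ i ih => rw [step, ih]
  | pred i ih => rw [← step, sub_add_cancel, ih]

end PathSpace

section MarkovChain

variable {S : Type*} [MeasurableSpace S] (μ : Measure (ℤ → S))

noncomputable def pathWeight : S → List S → ℝ≥0∞
  | _, [] => 1
  | a, y :: v => ENNReal.ofReal (condProb μ (proc S) y [a]) * pathWeight y v

variable {μ} [IsFiniteMeasure μ]

lemma MarkovOrderOne.measure_cyl_append_cons (hmk : MarkovOrderOne μ)
    (hst : IsStationary μ (proc S)) (P : List S) (a : S) (v : List S) :
    μ (cyl (proc S) 0 (P ++ a :: v)) = μ (cyl (proc S) 0 (P ++ [a])) * pathWeight μ a v := by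
  induction v generalizing P a with
  | nil => simp [pathWeight]
  | cons y v ih =>
    have hstep : μ (cyl (proc S) 0 (P ++ [a] ++ [y])) =
        μ (cyl (proc S) 0 (P ++ [a])) * ENNReal.ofReal (condProb μ (proc S) y [a]) := by
      rw [hst.measure_cyl_append_singleton_eq_mul]
      by_cases h0 : μ (cyl (proc S) 0 (P ++ [a])) = 0
      · simp [h0]
      · rw [hmk P a y (wordProb_pos_iff.2 h0)]
    calc μ (cyl (proc S) 0 (P ++ a :: y :: v))
        = μ (cyl (proc S) 0 ((P ++ [a]) ++ y :: v)) := by simp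
      _ = μ (cyl (proc S) 0 (P ++ [a] ++ [y])) * pathWeight μ y v := ih _ _
      _ = μ (cyl (proc S) 0 (P ++ [a])) * pathWeight μ a (y :: v) := by
        rw [hstep, pathWeight, mul_assoc]

end MarkovChain

section IndicatorProcess

variable {S β : Type*} [MeasurableSpace S] [MeasurableSingletonClass S] [Countable S]
  [MeasurableSpace β] (f : S → β)

lemma measurable_comp_path : Measurable fun (σ : ℤ → S) (n : ℤ) => f (σ n) :=
  measurable_pi_lambda _ fun n => (measurable_of_countable f).comp (measurable_pi_apply n)

lemma measurePreserving_map_comp_path {μ : Measure (ℤ → S)}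
    (hmp : MeasurePreserving (shift S) μ μ) :
    MeasurePreserving (shift β) (μ.map fun σ n => f (σ n)) (μ.map fun σ n => f (σ n)) :=
  ((measurable_comp_path f).measurePreserving μ).of_semiconj hmp (fun _ => rfl) measurable_shift

variable [MeasurableSingletonClass β]

lemma measure_map_cyl (μ : Measure (ℤ → S)) (l : ℤ) (w : List β) :
    μ.map (fun σ n => f (σ n)) (cyl (proc β) l w) =
      ∑' u : {u : List S // u.map f = w}, μ (cyl (proc S) l u) := by
  have hpre : (fun σ (n : ℤ) => f (σ n)) ⁻¹' cyl (proc β) l w =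
      ⋃ u : {u : List S // u.map f = w}, cyl (proc S) l u := by
    ext σ
    simp only [Set.mem_preimage, Set.mem_iUnion, mem_cyl_iff]
    have hmap : ∀ k, pastWord (proc β) l k (fun n => f (σ n)) =
        (pastWord (proc S) l k σ).map f := fun k => by simp [pastWord, proc]
    constructor
    · intro h
      exact ⟨⟨_, (hmap _).symm.trans h⟩, by simp⟩
    · rintro ⟨⟨u, rfl⟩, hu⟩
      rw [List.length_map, hmap, hu]
  rw [Measure.map_apply (measurable_comp_path f) measurableSet_cyl, hpre,
    measure_iUnion _ fun _ => measurableSet_cyl]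
  intro u v huv
  refine disjoint_cyl ?_ (Subtype.coe_injective.ne huv)
  simpa using congrArg List.length (u.2.trans v.2.symm)

variable {f} {b : β} {s : S}

noncomputable def consSplitEquiv (hf : ∀ a, f a = b ↔ a = s) (z w : List β) :
    {u : List S // u.map f = z} × {v : List S // v.map f = w} ≃
      {u : List S // u.map f = z ++ b :: w} :=
  Equiv.ofBijective (fun p => ⟨p.1.1 ++ s :: p.2.1, by simp [p.1.2, p.2.2, (hf s).2 rfl]⟩) <| by
    constructor
    · rintro ⟨⟨u, hu⟩, ⟨v, hv⟩⟩ ⟨⟨u', hu'⟩, ⟨v', hv'⟩⟩ h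
      have hlen : u.length = u'.length := by
        rw [← List.length_map (f := f), hu, ← hu', List.length_map]
      obtain ⟨rfl, h'⟩ := List.append_inj (Subtype.ext_iff.1 h) hlen
      simp_all
    · rintro ⟨u, hu⟩
      obtain ⟨u₁, u₂, rfl, hu₁, hu₂⟩ := List.map_eq_append_iff.1 hu
      obtain ⟨a, v, rfl, ha, hv⟩ := List.map_eq_cons_iff.1 hu₂
      obtain rfl := (hf a).1 ha
      exact ⟨⟨⟨u₁, hu₁⟩, ⟨v, hv⟩⟩, rfl⟩

variable {μ : Measure (ℤ → S)} [IsFiniteMeasure μ]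

lemma measure_map_cyl_append_cons (hmk : MarkovOrderOne μ) (hst : IsStationary μ (proc S))
    (hf : ∀ a, f a = b ↔ a = s) (z w : List β) :
    μ.map (fun σ n => f (σ n)) (cyl (proc β) 0 (z ++ b :: w)) =
      (∑' u : {u : List S // u.map f = z}, μ (cyl (proc S) 0 (u.1 ++ [s]))) *
        ∑' v : {v : List S // v.map f = w}, pathWeight μ s v := by
  rw [measure_map_cyl, ← (consSplitEquiv hf z w).tsum_eq, ENNReal.tsum_prod',
    ← ENNReal.tsum_mul_right]
  refine tsum_congr fun u => ?_
  rw [← ENNReal.tsum_mul_left]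
  exact tsum_congr fun v => hmk.measure_cyl_append_cons hst _ _ _

lemma isMemoryWord_map_cons (hmk : MarkovOrderOne μ) (hmp : MeasurePreserving (shift S) μ μ)
    (hf : ∀ a, f a = b ↔ a = s) {w : List β}
    (hw : 0 < wordProb (μ.map fun σ n => f (σ n)) (proc β) (b :: w)) :
    IsMemoryWord (μ.map fun σ n => f (σ n)) (proc β) (b :: w) := by
  refine (isStationary_of_measurePreserving (measurePreserving_map_comp_path f hmp)).isMemoryWord_of_factorization hw
    (fun z => ∑' u : {u : List S // u.map f = z}, μ (cyl (proc S) 0 (u.1 ++ [s])))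
    (fun v => ∑' v' : {v' : List S // v'.map f = w ++ v}, pathWeight μ s v') fun z v => ?_
  simpa using measure_map_cyl_append_cons hmk (isStationary_of_measurePreserving hmp) hf z (w ++ v)

end IndicatorProcess

/-- the indicator process of visits to a fixed state of a stationary ergodic
first order Markov chain is stationary, ergodic and finitarily Markovian; moreover the
conditional law of the next symbol depends only on the past back to the most recent `1`:
any past word reaching back to an occurrence of a one is a memory word (a.s.). -/
theorem indicator_of_markov_is_finitarily_markovian
    {S : Type*} [MeasurableSpace S] [MeasurableSingletonClass S] [Countable S]
    [DecidableEq S]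
    (μ : Measure (ℤ → S)) [IsProbabilityMeasure μ]
    (herg : Ergodic (shift S) μ) (hmk : MarkovOrderOne μ)
    (s : S) (hs : 0 < μ {ω | ω 1 = s}) :
    IsStationary (μ.map fun ω (n : ℤ) => decide (ω n = s)) (proc Bool) ∧
    Ergodic (shift Bool) (μ.map fun ω (n : ℤ) => decide (ω n = s)) ∧
    FinitarilyMarkovian (μ.map fun ω (n : ℤ) => decide (ω n = s)) (proc Bool) ∧
    (∀ᵐ ω ∂(μ.map fun ω (n : ℤ) => decide (ω n = s)), ∀ m : ℕ, ω (-(m : ℤ)) = true →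
      IsMemoryWord (μ.map fun ω (n : ℤ) => decide (ω n = s)) (proc Bool)
        (pastWord (proc Bool) 0 (m + 1) ω)) := by
  have hΦ := measurable_comp_path fun a : S => decide (a = s)
  set ν := μ.map fun ω (n : ℤ) => decide (ω n = s)
  have hergν : Ergodic (shift Bool) ν :=
    (hΦ.measurePreserving μ).ergodic_of_ergodic_semiconj herg measurable_shift fun _ => rfl
  have hmem : ∀ᵐ ω ∂ν, ∀ m : ℕ, ω (-(m : ℤ)) = true →
      IsMemoryWord ν (proc Bool) (pastWord (proc Bool) 0 (m + 1) ω) := by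
    filter_upwards [ae_measure_cyl_pastWord_ne_zero (X := proc Bool)] with ω hω m hm
    have hword : pastWord (proc Bool) 0 (m + 1) ω = true :: pastWord (proc Bool) 0 m ω := by
      simpa [proc, hm] using pastWord_succ (X := proc Bool) (l := 0) (k := m) (ω := ω)
    have hpos := wordProb_pos_iff.2 (hω (m + 1))
    rw [hword] at hpos ⊢
    exact isMemoryWord_map_cons hmk herg.toMeasurePreserving (fun _ => decide_eq_true_iff) hpos
  have hpast : ∀ᵐ ω ∂ν, ∃ m : ℕ, ω (-(m : ℤ)) ∈ ({true} : Set Bool) := by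
    have hone : MeasurableSet {ω : ℤ → Bool | ω 1 ∈ ({true} : Set Bool)} :=
      measurable_pi_apply 1 (measurableSet_singleton true)
    refine ae_exists_past_mem_of_ergodic hergν (measurableSet_singleton _) ?_
    rw [Measure.map_apply hΦ hone]
    simpa using hs.ne'
  refine ⟨isStationary_of_measurePreserving hergν.toMeasurePreserving, hergν, ?_, hmem⟩
  filter_upwards [hmem, hpast] with ω hω ⟨m, hm⟩ using ⟨m + 1, hω m hm⟩

end MemoryEst
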